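/- Let X_t = σ_t·η_t where σ_t > 0 is measurable with respect to ℱ_{t-1} (the σ-algebra generated by X_s, s ≤ t-1), and η_t is independent of ℱ_{t-1} with symmetric distribution, E[η_t] = 0, 0 < E[η_t²] < ∞, and σ_t square integrable. Then for any λ ∈ (0,1], Y_t = sign(X_t)·|X_t|^λ satisfies Y_t = σ_t^λ · ζ_t where ζ_t = sign(η_t)·|η_t|^λ is independent of the σ-algebra generated by (Y_s)_{s ≤ t-1}, has mean zero, and σ_t^λ is square integrable and measurable with respect to the σ-algebra generated by (Y_s)_{s ≤ t-1}. -/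
import Mathlib


open MeasureTheory ProbabilityTheory

/-- Signed power: `x^⟨λ⟩ = sign(x)·|x|^λ`. -/
noncomputable def signedPower (l x : ℝ) : ℝ := Real.sign x * |x| ^ l

/-- The σ-algebra generated by the past of a process up to time `t`. -/
def pastSigma {Ω : Type*} (X : ℤ → Ω → ℝ) (t : ℤ) : MeasurableSpace Ω :=
  ⨆ s ≤ t, MeasurableSpace.comap (X s) Real.measurableSpace

lemma measurable_realSign : Measurable Real.sign := by
  have : Real.sign = fun r : ℝ => if r < 0 then (-1 : ℝ) else if 0 < r then 1 else 0 := by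
    funext r; rfl
  rw [this]
  exact Measurable.ite measurableSet_Iio measurable_const
    (Measurable.ite measurableSet_Ioi measurable_const measurable_const)

lemma sp_measurable {l : ℝ} (hl : 0 ≤ l) : Measurable (signedPower l) :=
  measurable_realSign.mul ((Real.continuous_rpow_const hl).measurable.comp measurable_abs)

lemma sp_zero (l : ℝ) : signedPower l 0 = 0 := by
  simp [signedPower, Real.sign_zero]

lemma sp_inv {l : ℝ} (hl : 0 < l) (x : ℝ) : signedPower l⁻¹ (signedPower l x) = x := by
  rcases lt_trichotomy x 0 with h | h | h
  · have hax : 0 < |x| := abs_pos.mpr h.ne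
    have h1 : signedPower l x = -(|x| ^ l) := by
      simp [signedPower, Real.sign_of_neg h]
    have hpos : 0 < |x| ^ l := Real.rpow_pos_of_pos hax l
    rw [h1]
    simp only [signedPower, Real.sign_of_neg (neg_neg_iff_pos.mpr hpos), abs_neg,
      abs_of_pos hpos]
    rw [← Real.rpow_mul (le_of_lt hax)]
    simp [mul_inv_cancel₀ hl.ne', abs_of_neg h]
  · simp [h, sp_zero]
  · have hax : 0 < |x| := abs_pos.mpr h.ne'
    have hpos : 0 < |x| ^ l := Real.rpow_pos_of_pos hax l
    have h1 : signedPower l x = |x| ^ l := by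
      simp [signedPower, Real.sign_of_pos h]
    rw [h1]
    simp only [signedPower, Real.sign_of_pos hpos, abs_of_pos hpos, one_mul]
    rw [← Real.rpow_mul (le_of_lt hax)]
    simp [mul_inv_cancel₀ hl.ne', abs_of_pos h]

lemma sp_neg (l x : ℝ) : signedPower l (-x) = -signedPower l x := by
  simp [signedPower, Real.sign_neg, neg_mul]

lemma sp_mul_pos {s : ℝ} (hs : 0 < s) (l x : ℝ) :
    signedPower l (s * x) = s ^ l * signedPower l x := by
  have habs : |s * x| = s * |x| := by rw [abs_mul, abs_of_pos hs]
  have hsign : Real.sign (s * x) = Real.sign x := by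
    rcases lt_trichotomy x 0 with h | h | h
    · rw [Real.sign_of_neg h, Real.sign_of_neg (mul_neg_of_pos_of_neg hs h)]
    · simp [h, Real.sign_zero]
    · rw [Real.sign_of_pos h, Real.sign_of_pos (mul_pos hs h)]
  rw [signedPower, hsign, habs, Real.mul_rpow hs.le (abs_nonneg x), signedPower]
  ring

lemma comap_sp {Ω : Type*} {l : ℝ} (hl : 0 < l) (g : Ω → ℝ) :
    MeasurableSpace.comap (fun ω => signedPower l (g ω)) Real.measurableSpace
      = MeasurableSpace.comap g Real.measurableSpace := by
  apply le_antisymm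
  · have : (fun ω => signedPower l (g ω)) = signedPower l ∘ g := rfl
    rw [this, ← MeasurableSpace.comap_comp]
    exact MeasurableSpace.comap_mono (measurable_iff_comap_le.mp (sp_measurable hl.le))
  · have hg : g = signedPower l⁻¹ ∘ (fun ω => signedPower l (g ω)) := by
      funext ω; simp [Function.comp, sp_inv hl]
    conv_lhs => rw [hg]
    rw [← MeasurableSpace.comap_comp]
    exact MeasurableSpace.comap_mono (measurable_iff_comap_le.mp (sp_measurable (inv_nonneg.mpr hl.le)))

lemma pastSigma_sp {Ω : Type*} (X : ℤ → Ω → ℝ) (t : ℤ) {l : ℝ} (hl : 0 < l) :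
    pastSigma (fun s ω => signedPower l (X s ω)) t = pastSigma X t := by
  unfold pastSigma
  exact iSup_congr fun s => iSup_congr fun _ => comap_sp hl (X s)

/-- Signed powers of an ARCH-type process are ARCH-type: if `X_t = σ_t·η_t`
with `σ_t > 0` square integrable and `ℱ_{t-1}`-measurable, `η_t` independent
of `ℱ_{t-1}`, symmetric, mean zero and with finite positive variance, then
for `λ ∈ (0,1]`, `Y_t = X_t^⟨λ⟩ = σ_t^λ·ζ_t` where `ζ_t = η_t^⟨λ⟩` is
independent of the past of `Y` up to `t-1` and has mean zero, and `σ_t^λ`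
is square integrable and measurable w.r.t. the past of `Y` up to `t-1`. -/
theorem signedPower_archType {Ω : Type*} [MeasurableSpace Ω]
    (μ : Measure Ω) [IsProbabilityMeasure μ]
    (X : ℤ → Ω → ℝ) (hXmeas : ∀ s, Measurable (X s))
    (t : ℤ) (sig eta : Ω → ℝ)
    (hfactor : ∀ ω, X t ω = sig ω * eta ω)
    (hsig_pos : ∀ ω, 0 < sig ω)
    (hsig_meas : Measurable[pastSigma X (t - 1)] sig)
    (hsig_sq : Integrable (fun ω => (sig ω) ^ 2) μ)
    (heta_meas : Measurable eta)
    (heta_indep :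
      Indep (MeasurableSpace.comap eta Real.measurableSpace)
        (pastSigma X (t - 1)) μ)
    (heta_sym : Measure.map eta μ = Measure.map (fun ω => -eta ω) μ)
    (heta_mean : ∫ ω, eta ω ∂μ = 0)
    (heta_sq : Integrable (fun ω => (eta ω) ^ 2) μ)
    (heta_var_pos : 0 < ∫ ω, (eta ω) ^ 2 ∂μ)
    (l : ℝ) (hl0 : 0 < l) (hl1 : l ≤ 1) :
    (∀ ω, signedPower l (X t ω) = sig ω ^ l * signedPower l (eta ω)) ∧
    Indep
      (MeasurableSpace.comap (fun ω => signedPower l (eta ω))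
        Real.measurableSpace)
      (pastSigma (fun s ω => signedPower l (X s ω)) (t - 1)) μ ∧
    (∫ ω, signedPower l (eta ω) ∂μ = 0) ∧
    Integrable (fun ω => (sig ω ^ l) ^ 2) μ ∧
    Measurable[pastSigma (fun s ω => signedPower l (X s ω)) (t - 1)]
      (fun ω => sig ω ^ l) := by
  have hpastle : pastSigma X (t - 1) ≤ ‹MeasurableSpace Ω› :=
    iSup₂_le fun s _ => measurable_iff_comap_le.mp (hXmeas s)
  have hsigm : Measurable sig := hsig_meas.mono hpastle le_rfl
  have hpeq := pastSigma_sp X (t - 1) hl0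
  refine ⟨fun ω => by rw [hfactor ω, sp_mul_pos (hsig_pos ω)], ?_, ?_, ?_, ?_⟩
  · rw [hpeq, comap_sp hl0 eta]
    exact heta_indep
  · have h1 : ∫ ω, signedPower l (eta ω) ∂μ
        = ∫ x, signedPower l x ∂(Measure.map eta μ) :=
      (integral_map heta_meas.aemeasurable
        (sp_measurable hl0.le).aestronglyMeasurable).symm
    have h2 : ∫ x, signedPower l x ∂(Measure.map (fun ω => -eta ω) μ)
        = ∫ ω, signedPower l (-eta ω) ∂μ :=
      integral_map heta_meas.neg.aemeasurable
        (sp_measurable hl0.le).aestronglyMeasurable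
    have h3 : ∫ ω, signedPower l (-eta ω) ∂μ = -∫ ω, signedPower l (eta ω) ∂μ := by
      simp_rw [sp_neg]
      exact integral_neg _
    rw [heta_sym, h2, h3] at h1
    linarith
  · have hfm : Measurable (fun ω => (sig ω ^ l) ^ 2) :=
      (((Real.continuous_rpow_const hl0.le).measurable).comp hsigm).pow_const 2
    refine (((integrable_const (1 : ℝ)).add hsig_sq).mono
      hfm.aestronglyMeasurable (Filter.Eventually.of_forall fun ω => ?_))
    have hs := hsig_pos ω
    have hnn : (0:ℝ) ≤ (sig ω ^ l) ^ 2 := sq_nonneg _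
    have hrw : (sig ω ^ l) ^ 2 = sig ω ^ (l * 2) := by
      rw [← Real.rpow_natCast (sig ω ^ l) 2, ← Real.rpow_mul hs.le]
      norm_num
    have hb : (sig ω ^ l) ^ 2 ≤ 1 + sig ω ^ 2 := by
      rcases le_or_gt (sig ω) 1 with h | h
      · have : sig ω ^ (l * 2) ≤ 1 :=
          Real.rpow_le_one hs.le h (by positivity)
        nlinarith [sq_nonneg (sig ω)]
      · have h2 : sig ω ^ (l * 2) ≤ sig ω ^ ((2:ℕ) : ℝ) :=
          Real.rpow_le_rpow_of_exponent_le h.le (by push_cast; nlinarith)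
        rw [Real.rpow_natCast] at h2
        nlinarith
    have hgnn : (0:ℝ) ≤ 1 + sig ω ^ 2 := by positivity
    simpa [Real.norm_eq_abs, abs_of_nonneg hnn, abs_of_nonneg hgnn] using hb
  · rw [hpeq]
    exact ((Real.continuous_rpow_const hl0.le).measurable).comp hsig_meas
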